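/- arXiv:2202.07216 — 2 statements merged into one kernel-verified Lean document; each statement's English description precedes it below -/
import Mathlib

section
/- Let f : [0,1]^n → [0,1] be continuous and such that both f and 1−f are polynomially bounded. Then there exists an integer t such that, defining g(p) := P_p[f(X̄_t) ≥ 1/2] and f̃(p) := (4/3)·(f(p) − (1/4)·g(p)), the function f̃ maps [0,1]^n into [0,1], is continuous, and both f̃ and 1−f̃ are polynomially bounded. -/
/-!
It suffices that for every continuous, nonnegative, polynomially bounded `h` and all large `t`,
`P_p[h(X̄_t) ≥ 1/2] ≤ 3 h(p)`. Applied to `f` and `1 - f` it gives `g ≤ 3 f` and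
`1 - g ≤ 3 (1 - f)`, hence `f / 3 ≤ f̃ ≤ 4 f / 3` and `(1 - f) / 3 ≤ 1 - f̃ ≤ 4 (1 - f) / 3`, and
functions comparable up to constant factors are polynomially bounded together.

For the bound we may assume `h(p) < 1/3`. Split the event according to the sets `A`, `B` of
coordinates with `p i ≤ θ`, `X̄_i ≤ δ`, resp. `p i ≥ 1 - θ`, `X̄_i ≥ 1 - δ`. Then `X̄_t` is within
`δ` of the face `F_{A,S,B}`, so by uniform continuity `h` does not vanish on it and
`h(p) ≥ c · facePoly^m`. Every other coordinate within `θ` of an end of `[0,1]` has moved at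
least `δ` away from it, which has probability `≤ 2^t p_i^{δt}` and beats the factor `p_i^m` that
it contributes to `facePoly^m`. If there is no such coordinate, Chebyshev's inequality bounds the
probability that `X̄_t` strays `δ` from `p`. Summing over the `4^n` pairs `(A, B)` gives the bound.
-/

open Finset

def cube (n : ℕ) : Set (Fin n → ℝ) := {p | ∀ i, 0 ≤ p i ∧ p i ≤ 1}

/-- The open face `F_{A,S,B}` of the hypercube, where `S` is the complement of `A ∪ B`. -/
def face {n : ℕ} (A B : Finset (Fin n)) : Set (Fin n → ℝ) :=
  {p | (∀ i ∈ A, p i = 0) ∧ (∀ i ∈ B, p i = 1) ∧ ∀ i ∉ A ∪ B, 0 < p i ∧ p i < 1}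

/-- `(1-p)^A · (p(1-p))^S · p^B` for the face `F_{A,S,B}`. -/
noncomputable def facePoly {n : ℕ} (A B : Finset (Fin n)) (p : Fin n → ℝ) : ℝ :=
  (∏ i ∈ A, (1 - p i)) * (∏ i ∈ (A ∪ B)ᶜ, p i * (1 - p i)) * (∏ i ∈ B, p i)
/-- A function `f : [0,1]^n → [0,1]` is polynomially bounded. -/
def PolyBounded {n : ℕ} (f : (Fin n → ℝ) → ℝ) : Prop :=
  ∃ (m : ℕ) (c : ℝ), 0 < c ∧ ∀ A B : Finset (Fin n), Disjoint A B →
    (¬ ∀ q ∈ face A B, f q = 0) →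
    ∀ p ∈ cube n, c * facePoly A B p ^ m ≤ f p
/-- Probability weight of a realization `x` of `t` flips of the `n` coins `p`. -/
noncomputable def flipWeight {n t : ℕ} (p : Fin n → ℝ) (x : Fin t → Fin n → Bool) : ℝ :=
  ∏ s, ∏ i, if x s i then p i else 1 - p i

/-- `P_p[E]`, the probability of the event `E` for `t` i.i.d. flips of the `n` coins `p`. -/
noncomputable def coinProb {n : ℕ} (t : ℕ) (p : Fin n → ℝ)
    (E : Set (Fin t → Fin n → Bool)) : ℝ :=
  ∑ x : Fin t → Fin n → Bool, Set.indicator E (flipWeight p) x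

/-- The empirical average `X̄_t` of the coin flips `x`. -/
noncomputable def empAvg {n : ℕ} (t : ℕ) (x : Fin t → Fin n → Bool) : Fin n → ℝ :=
  fun i => (∑ s, if x s i then (1 : ℝ) else 0) / t

noncomputable def bernWeight (t : ℕ) (a : ℝ) (y : Fin t → Bool) : ℝ :=
  ∏ s, if y s then a else 1 - a

noncomputable def bernProb (t : ℕ) (a : ℝ) (T : Set (Fin t → Bool)) : ℝ :=
  ∑ y, T.indicator (bernWeight t a) y

def heads {t : ℕ} (y : Fin t → Bool) : ℕ := #{s | y s}

def tails {t : ℕ} (y : Fin t → Bool) : ℕ := #{s | y s = false}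

section Bernoulli

variable {t : ℕ} {a : ℝ}

lemma heads_add_tails (y : Fin t → Bool) : heads y + tails y = t := by
  simpa [heads, tails] using card_filter_add_card_filter_not (s := univ) (fun s => y s = true)

lemma cast_heads (y : Fin t → Bool) : (heads y : ℝ) = ∑ s, if y s then 1 else 0 := by
  rw [heads, natCast_card_filter]

lemma bernWeight_eq (y : Fin t → Bool) :
    bernWeight t a y = a ^ heads y * (1 - a) ^ tails y := by
  simp [bernWeight, prod_ite, heads, tails]

lemma bernWeight_nonneg (h0 : 0 ≤ a) (h1 : a ≤ 1) (y : Fin t → Bool) : 0 ≤ bernWeight t a y :=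
  prod_nonneg fun s _ => by split <;> linarith

lemma bernWeight_le_pow_heads (h0 : 0 ≤ a) (h1 : a ≤ 1) (y : Fin t → Bool) :
    bernWeight t a y ≤ a ^ heads y := by
  rw [bernWeight_eq]
  exact mul_le_of_le_one_right (by positivity) (pow_le_one₀ (by linarith) (by linarith))

lemma bernWeight_le_pow_tails (h0 : 0 ≤ a) (h1 : a ≤ 1) (y : Fin t → Bool) :
    bernWeight t a y ≤ (1 - a) ^ tails y := by
  rw [bernWeight_eq]
  exact mul_le_of_le_one_left (pow_nonneg (by linarith) _) (pow_le_one₀ h0 h1)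

lemma sum_bernWeight (t : ℕ) (a : ℝ) : ∑ y, bernWeight t a y = 1 := by
  simp only [bernWeight]
  rw [← Fintype.prod_sum fun (_ : Fin t) (b : Bool) => if b then a else 1 - a]
  simp

lemma sum_bernWeight_mul_sq_sub (t : ℕ) (a : ℝ) :
    ∑ y, bernWeight t a y * (heads y - t * a) ^ 2 = t * a * (1 - a) := by
  induction t with
  | zero => simp [heads]
  | succ t ih =>
    have hsplit : ∀ c : ℝ, ∑ y, bernWeight t a y * (c + (heads y - t * a)) ^ 2
        = c ^ 2 + 2 * c * ∑ y, bernWeight t a y * (heads y - t * a) + t * a * (1 - a) := by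
      intro c
      rw [← ih, ← mul_one (c ^ 2), ← sum_bernWeight t a, mul_sum, mul_sum, ← sum_add_distrib,
        ← sum_add_distrib]
      exact sum_congr rfl fun y _ => by ring
    rw [← (Fin.consEquiv fun _ => Bool).sum_comp, Fintype.sum_prod_type, Fintype.sum_bool]
    have hcons : ∀ (b : Bool) (y : Fin t → Bool),
        bernWeight (t + 1) a (Fin.consEquiv (fun _ => Bool) (b, y))
            * (heads (Fin.consEquiv (fun _ => Bool) (b, y)) - (t + 1 : ℕ) * a) ^ 2
          = (if b then a else 1 - a)
            * (bernWeight t a y * ((if b then 1 - a else -a) + (heads y - t * a)) ^ 2) := by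
      intro b y
      simp only [Fin.consEquiv_apply, bernWeight, Fin.prod_univ_succ, Fin.cons_zero,
        Fin.cons_succ, cast_heads, Fin.sum_univ_succ]
      cases b <;>
        simp only [Bool.false_eq_true, ↓reduceIte, sum_boole, zero_add, Nat.cast_add,
          Nat.cast_one] <;> ring
    simp only [hcons, ← mul_sum, hsplit]
    -- the cross terms cancel since `a * (1 - a) + (1 - a) * (-a) = 0`
    simp only [↓reduceIte, Bool.false_eq_true, even_two, Even.neg_pow, mul_neg, neg_mul,
      Nat.cast_add, Nat.cast_one]
    ring

end Bernoulli

section BernoulliProb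

variable {t : ℕ} {a : ℝ}

lemma bernProb_nonneg (h0 : 0 ≤ a) (h1 : a ≤ 1) (T : Set (Fin t → Bool)) : 0 ≤ bernProb t a T :=
  sum_nonneg fun y _ => Set.indicator_nonneg (fun y _ => bernWeight_nonneg h0 h1 y) y

lemma bernProb_univ : bernProb t a Set.univ = 1 := by
  simp [bernProb, sum_bernWeight]

lemma bernProb_le_two_pow_mul {T : Set (Fin t → Bool)} {b : ℝ} (hb : 0 ≤ b)
    (hT : ∀ y ∈ T, bernWeight t a y ≤ b) : bernProb t a T ≤ 2 ^ t * b := by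
  calc bernProb t a T ≤ ∑ _y : Fin t → Bool, b :=
        sum_le_sum fun y _ => Set.indicator_apply_le' (hT y) fun _ => hb
    _ = 2 ^ t * b := by simp

lemma bernProb_heads_gt_le (h0 : 0 ≤ a) (h1 : a ≤ 1) {r : ℝ} (hr : 0 ≤ r) :
    bernProb t a {y | r < heads y} ≤ 2 ^ t * a ^ (⌊r⌋₊ + 1) :=
  bernProb_le_two_pow_mul (by positivity) fun y hy =>
    (bernWeight_le_pow_heads h0 h1 y).trans
      (pow_le_pow_of_le_one h0 h1 (Nat.succ_le_of_lt ((Nat.floor_lt hr).2 hy)))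

lemma bernProb_tails_gt_le (h0 : 0 ≤ a) (h1 : a ≤ 1) {r : ℝ} (hr : 0 ≤ r) :
    bernProb t a {y | r < tails y} ≤ 2 ^ t * (1 - a) ^ (⌊r⌋₊ + 1) :=
  bernProb_le_two_pow_mul (pow_nonneg (by linarith) _) fun y hy =>
    (bernWeight_le_pow_tails h0 h1 y).trans
      (pow_le_pow_of_le_one (by linarith) (by linarith)
        (Nat.succ_le_of_lt ((Nat.floor_lt hr).2 hy)))

lemma bernProb_abs_sub_ge_le (h0 : 0 ≤ a) (h1 : a ≤ 1) {δ : ℝ} (hδ : 0 < δ) (ht : 0 < t) :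
    bernProb t a {y | δ ≤ |heads y / t - a|} ≤ 1 / (4 * t * δ ^ 2) := by
  have htR : (0 : ℝ) < t := by exact_mod_cast ht
  have hpoint : ∀ y, {y : Fin t → Bool | δ ≤ |heads y / t - a|}.indicator (bernWeight t a) y
      ≤ bernWeight t a y * (heads y - t * a) ^ 2 / (t * δ) ^ 2 := by
    intro y
    have hw := bernWeight_nonneg h0 h1 y
    refine Set.indicator_apply_le' (fun hy => ?_) fun _ => by positivity
    have hdev : t * δ ≤ |heads y - t * a| := by
      have : heads y - t * a = t * (heads y / t - a) := by field_simp
      rw [this, abs_mul, abs_of_pos htR]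
      exact mul_le_mul_of_nonneg_left hy htR.le
    have hsq : (t * δ) ^ 2 ≤ (heads y - t * a) ^ 2 := by
      simpa only [sq_abs] using pow_le_pow_left₀ (by positivity) hdev 2
    rw [le_div_iff₀ (by positivity)]
    exact mul_le_mul_of_nonneg_left hsq hw
  calc bernProb t a {y | δ ≤ |heads y / t - a|}
      ≤ ∑ y, bernWeight t a y * (heads y - t * a) ^ 2 / (t * δ) ^ 2 :=
        sum_le_sum fun y _ => hpoint y
    _ = t * (a * (1 - a)) / (t * δ) ^ 2 := by
        rw [← sum_div, sum_bernWeight_mul_sq_sub, mul_assoc]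
    _ ≤ t * (1 / 4) / (t * δ) ^ 2 := by gcongr; nlinarith [sq_nonneg (a - 1 / 2)]
    _ = 1 / (4 * t * δ ^ 2) := by field_simp

end BernoulliProb

def column {n t : ℕ} (x : Fin t → Fin n → Bool) (i : Fin n) : Fin t → Bool := fun s => x s i

section CoinProb

variable {n t : ℕ} {p : Fin n → ℝ}

lemma empAvg_eq_heads (x : Fin t → Fin n → Bool) (i : Fin n) :
    empAvg t x i = heads (column x i) / t := by
  rw [cast_heads]; rfl

lemma one_sub_empAvg (ht : 0 < t) (x : Fin t → Fin n → Bool) (i : Fin n) :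
    1 - empAvg t x i = tails (column x i) / t := by
  have htR : (t : ℝ) ≠ 0 := by positivity
  have hsum : (heads (column x i) : ℝ) + tails (column x i) = t := by
    exact_mod_cast heads_add_tails _
  rw [empAvg_eq_heads, eq_div_iff htR, sub_mul, div_mul_cancel₀ _ htR]
  linarith

lemma empAvg_mem_cube (x : Fin t → Fin n → Bool) : empAvg t x ∈ cube n := by
  intro i
  rw [empAvg_eq_heads]
  have := heads_add_tails (column x i)
  exact ⟨by positivity, div_le_one_of_le₀ (by exact_mod_cast (by omega : heads _ ≤ t))
    (Nat.cast_nonneg t)⟩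

lemma flipWeight_eq_prod (p : Fin n → ℝ) (x : Fin t → Fin n → Bool) :
    flipWeight p x = ∏ i, bernWeight t (p i) (column x i) :=
  prod_comm

lemma flipWeight_nonneg (hp : p ∈ cube n) (x : Fin t → Fin n → Bool) : 0 ≤ flipWeight p x := by
  rw [flipWeight_eq_prod]
  exact prod_nonneg fun i _ => bernWeight_nonneg (hp i).1 (hp i).2 _

lemma coinProb_nonneg (hp : p ∈ cube n) (E : Set (Fin t → Fin n → Bool)) :
    0 ≤ coinProb t p E :=
  sum_nonneg fun x _ => Set.indicator_nonneg (fun x _ => flipWeight_nonneg hp x) x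

lemma coinProb_mono (hp : p ∈ cube n) {E F : Set (Fin t → Fin n → Bool)} (hEF : E ⊆ F) :
    coinProb t p E ≤ coinProb t p F :=
  sum_le_sum fun x _ => Set.indicator_le_indicator_of_subset hEF (flipWeight_nonneg hp) x

lemma coinProb_biUnion_le (hp : p ∈ cube n) {ι : Type*} (s : Finset ι)
    (D : ι → Set (Fin t → Fin n → Bool)) :
    coinProb t p (⋃ i ∈ s, D i) ≤ ∑ i ∈ s, coinProb t p (D i) := by
  simp only [coinProb]
  rw [sum_comm]
  refine sum_le_sum fun x _ => Set.indicator_apply_le' (fun hx => ?_) fun _ =>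
    sum_nonneg fun i _ => Set.indicator_nonneg (fun x _ => flipWeight_nonneg hp x) x
  obtain ⟨i, hi, hxi⟩ := Set.mem_iUnion₂.1 hx
  rw [← Set.indicator_of_mem hxi (flipWeight p)]
  exact single_le_sum (f := fun i => (D i).indicator (flipWeight p) x)
    (fun i _ => Set.indicator_nonneg (fun x _ => flipWeight_nonneg hp x) x) hi

lemma coinProb_pi (p : Fin n → ℝ) (T : Fin n → Set (Fin t → Bool)) :
    coinProb t p {x | ∀ i, column x i ∈ T i} = ∏ i, bernProb t (p i) (T i) := by
  classical
  have hpoint : ∀ x, {x | ∀ i, column x i ∈ T i}.indicator (flipWeight p) x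
      = ∏ i, (T i).indicator (bernWeight t (p i)) (column x i) := by
    intro x
    simp only [Set.indicator_apply, prod_ite_zero, flipWeight_eq_prod, Set.mem_ofPred_eq,
      mem_univ, true_imp_iff]
  simp only [coinProb, bernProb, hpoint, Fintype.prod_sum]
  exact (Equiv.piComm fun _ _ => Bool).sum_comp
    fun z => ∏ i, (T i).indicator (bernWeight t (p i)) (z i)

lemma coinProb_column (p : Fin n → ℝ) (i : Fin n) (T : Set (Fin t → Bool)) :
    coinProb t p {x | column x i ∈ T} = bernProb t (p i) T := by
  have := coinProb_pi p fun j => if j = i then T else Set.univ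
  simp only [apply_ite (bernProb t _), bernProb_univ, prod_ite_eq', mem_univ, if_true] at this
  rw [← this]
  congr 1
  ext x
  refine ⟨fun hx j => ?_, fun hx => by simpa using hx i⟩
  split_ifs with hj
  · exact hj ▸ hx
  · trivial

lemma coinProb_univ (p : Fin n → ℝ) : coinProb t p Set.univ = 1 := by
  simpa [bernProb_univ] using coinProb_pi (t := t) p fun _ => Set.univ

lemma coinProb_compl (p : Fin n → ℝ) (E : Set (Fin t → Fin n → Bool)) :
    coinProb t p Eᶜ = 1 - coinProb t p E := by
  rw [← coinProb_univ (t := t) p, eq_sub_iff_add_eq]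
  simp only [coinProb, ← sum_add_distrib]
  simp [Set.indicator_compl_add_self_apply]

lemma one_sub_coinProb_le (hp : p ∈ cube n) (f : (Fin n → ℝ) → ℝ) :
    1 - coinProb t p {x | 1 / 2 ≤ f (empAvg t x)}
      ≤ coinProb t p {x | 1 / 2 ≤ 1 - f (empAvg t x)} := by
  rw [← coinProb_compl]
  refine coinProb_mono hp fun x hx => ?_
  simp only [Set.mem_compl_iff, Set.mem_ofPred_eq, not_le] at hx ⊢
  linarith

lemma coinProb_le_one (hp : p ∈ cube n) (E : Set (Fin t → Fin n → Bool)) :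
    coinProb t p E ≤ 1 :=
  coinProb_univ (t := t) p ▸ coinProb_mono hp (Set.subset_univ E)

lemma continuous_coinProb (E : Set (Fin t → Fin n → Bool)) :
    Continuous fun p : Fin n → ℝ => coinProb t p E := by
  refine continuous_finsetSum _ fun x _ => ?_
  by_cases hx : x ∈ E <;> simp only [hx, Set.indicator_of_mem, Set.indicator_of_notMem,
    not_false_eq_true, flipWeight_eq_prod, bernWeight_eq] <;> fun_prop

end CoinProb

section Faces

variable {n : ℕ}

lemma isCompact_cube (n : ℕ) : IsCompact (cube n) := by
  have : cube n = Set.Icc 0 1 := by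
    ext p
    simp only [cube, Set.mem_ofPred_eq, Set.mem_Icc, Pi.le_def, Pi.zero_apply, Pi.one_apply,
      forall_and]
  exact this ▸ isCompact_Icc

lemma face_subset_cube (A B : Finset (Fin n)) : face A B ⊆ cube n := by
  rintro q ⟨hA, hB, hS⟩ i
  by_cases hiA : i ∈ A
  · simp [hA i hiA]
  by_cases hiB : i ∈ B
  · simp [hB i hiB]
  have := hS i (by simp [hiA, hiB])
  constructor <;> linarith

/-- Clamping the free coordinates into `[δ, 1 - δ]` moves a point by at most `δ`. -/
lemma exists_mem_face_dist_le {A B : Finset (Fin n)} (hAB : Disjoint A B) {δ : ℝ} (hδ0 : 0 < δ)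
    (hδ : δ ≤ 1 / 2) {q : Fin n → ℝ} (hq : q ∈ cube n) (hA : ∀ i ∈ A, q i ≤ δ)
    (hB : ∀ i ∈ B, 1 - δ ≤ q i) : ∃ q' ∈ face A B, dist q q' ≤ δ := by
  refine ⟨fun i => if i ∈ A then 0 else if i ∈ B then 1 else max δ (min (1 - δ) (q i)),
    ⟨fun i hi => by simp [hi], fun i hi => by simp [hi, disjoint_right.1 hAB hi],
      fun i hi => ?_⟩, (dist_pi_le_iff hδ0.le).2 fun i => ?_⟩
  · simp only [mem_union, not_or] at hi
    simp only [hi.1, hi.2, if_false]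
    exact ⟨lt_max_of_lt_left hδ0, max_lt (by linarith) ((min_le_left _ _).trans_lt (by linarith))⟩
  · have := hq i
    rw [Real.dist_eq, abs_le]
    split_ifs with hiA hiB
    · have := hA i hiA; constructor <;> linarith
    · have := hB i hiB; constructor <;> linarith
    · rcases max_cases δ (min (1 - δ) (q i)) with h | h <;>
        rcases min_cases (1 - δ) (q i) with h' | h' <;> constructor <;> linarith

lemma facePoly_eq_prod {A B : Finset (Fin n)} (hAB : Disjoint A B) (p : Fin n → ℝ) :
    facePoly A B p
      = ∏ i, if i ∈ A then 1 - p i else if i ∈ B then p i else p i * (1 - p i) := by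
  rw [facePoly, ← union_compl (A ∪ B), prod_union disjoint_compl_right, prod_union hAB,
    mul_right_comm]
  refine congr_arg₂ (· * ·) (congr_arg₂ (· * ·) ?_ ?_) ?_
  · exact prod_congr rfl fun i hi => by simp [hi]
  · exact prod_congr rfl fun i hi => by simp [hi, disjoint_right.1 hAB hi]
  · exact prod_congr rfl fun i hi => by simp_all

end Faces

/-- The factors of `facePoly A B p` that a point near the face `F_{A,S,B}` leaves uncontrolled:
those of coordinates within `θ` of `0` (resp. `1`) that are not in `A` (resp. `B`). -/
noncomputable def gap {n : ℕ} (θ : ℝ) (A B : Finset (Fin n)) (p : Fin n → ℝ) (i : Fin n) : ℝ :=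
  if p i ≤ θ ∧ i ∉ A then p i else if 1 - θ ≤ p i ∧ i ∉ B then 1 - p i else 1

section FacePoly

variable {n : ℕ} {θ : ℝ} {A B : Finset (Fin n)} {p : Fin n → ℝ}

lemma gap_nonneg (hp : p ∈ cube n) (i : Fin n) : 0 ≤ gap θ A B p i := by
  have := hp i
  unfold gap
  split_ifs <;> linarith

lemma pow_mul_prod_gap_le_facePoly (hθ0 : 0 ≤ θ) (hθ : θ ≤ 1 / 2) (hp : p ∈ cube n)
    (hAB : Disjoint A B) (hA : ∀ i ∈ A, p i ≤ θ) (hB : ∀ i ∈ B, 1 - θ ≤ p i) :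
    (θ * (1 - θ)) ^ n * ∏ i, gap θ A B p i ≤ facePoly A B p := by
  rw [facePoly_eq_prod hAB, ← Fin.prod_const n, ← prod_mul_distrib]
  have hlam0 : 0 ≤ θ * (1 - θ) := by nlinarith
  have hlam : θ * (1 - θ) ≤ 1 - θ := by nlinarith
  refine prod_le_prod (fun i _ => mul_nonneg hlam0 (gap_nonneg hp i)) fun i _ => ?_
  obtain ⟨h0, h1⟩ := hp i
  have hp' : θ * (1 - θ) * p i ≤ p i := mul_le_of_le_one_left h0 (by linarith)
  have hq' : θ * (1 - θ) * (1 - p i) ≤ 1 - p i := mul_le_of_le_one_left (by linarith) (by linarith)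
  unfold gap
  by_cases hiA : i ∈ A
  · have := hA i hiA
    simp only [hiA, not_true_eq_false, and_false, if_false, if_true]
    split_ifs <;> linarith
  by_cases hiB : i ∈ B
  · have := hB i hiB
    simp only [hiA, hiB, not_true_eq_false, not_false_eq_true, and_false, and_true, if_false,
      if_true]
    split_ifs <;> linarith
  simp only [hiA, hiB, not_false_eq_true, and_true, if_false]
  split_ifs <;> nlinarith

lemma prod_gap_eq_one (hU : ¬ ∃ i, (p i ≤ θ ∧ i ∉ A) ∨ (1 - θ ≤ p i ∧ i ∉ B)) :
    ∏ i, gap θ A B p i = 1 := by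
  refine prod_eq_one fun i _ => ?_
  have := not_or.1 (not_exists.1 hU i)
  rw [gap, if_neg this.1, if_neg this.2]

end FacePoly

lemma PolyBounded.of_le {n : ℕ} {f g : (Fin n → ℝ) → ℝ} (hf : PolyBounded f) {C : ℝ} (hC : 0 < C)
    (hfg : ∀ p ∈ cube n, f p ≤ C * g p) (hg0 : ∀ p ∈ cube n, 0 ≤ g p)
    (hgf : ∀ p ∈ cube n, g p ≤ C * f p) : PolyBounded g := by
  obtain ⟨m, c, hc, H⟩ := hf
  refine ⟨m, c / C, by positivity, fun A B hAB hg p hp => ?_⟩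
  have hf : ¬ ∀ q ∈ face A B, f q = 0 := fun hzero => hg fun q hq => by
    have := hgf q (face_subset_cube A B hq)
    rw [hzero q hq, mul_zero] at this
    exact le_antisymm this (hg0 q (face_subset_cube A B hq))
  rw [div_mul_eq_mul_div, div_le_iff₀ hC, mul_comm (g p)]
  exact (H A B hAB hf p hp).trans (hfg p hp)

lemma two_pow_mul_pow_le {t k m : ℕ} {a θ : ℝ} (ha : 0 ≤ a) (haθ : a ≤ θ) (hθ : 0 < θ)
    (hmk : m ≤ k) (hθk : θ ^ k ≤ (1 / 8) ^ t) : 2 ^ t * a ^ k ≤ (1 / 4) ^ t / θ ^ m * a ^ m := by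
  calc 2 ^ t * a ^ k = 2 ^ t * (a ^ m * a ^ (k - m)) := by rw [← pow_add, Nat.add_sub_cancel' hmk]
    _ ≤ 2 ^ t * (a ^ m * θ ^ (k - m)) := by gcongr
    _ = 2 ^ t * θ ^ k / θ ^ m * a ^ m := by rw [pow_sub₀ _ hθ.ne' hmk]; ring
    _ ≤ 2 ^ t * (1 / 8) ^ t / θ ^ m * a ^ m := by gcongr
    _ = (1 / 4) ^ t / θ ^ m * a ^ m := by rw [← mul_pow]; norm_num

section Cells

variable {n t : ℕ} {p : Fin n → ℝ}

lemma coinProb_exists_abs_sub_ge_le (hp : p ∈ cube n) {δ : ℝ} (hδ : 0 < δ) (ht : 0 < t) :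
    coinProb t p {x | ∃ i, δ ≤ |empAvg t x i - p i|} ≤ n / (4 * t * δ ^ 2) := by
  let D : Fin n → Set (Fin t → Fin n → Bool) := fun i =>
    {x | column x i ∈ {y | δ ≤ |heads y / t - p i|}}
  have hcover : {x | ∃ i, δ ≤ |empAvg t x i - p i|} ⊆ ⋃ i ∈ univ, D i := fun x ⟨i, hi⟩ =>
    Set.mem_biUnion (mem_univ i) (by simpa only [D, Set.mem_ofPred_eq, ← empAvg_eq_heads])
  calc coinProb t p {x | ∃ i, δ ≤ |empAvg t x i - p i|}
      ≤ ∑ i, bernProb t (p i) {y | δ ≤ |heads y / t - p i|} := by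
        simpa only [D, coinProb_column] using
          (coinProb_mono hp hcover).trans (coinProb_biUnion_le hp univ D)
    _ ≤ ∑ _i : Fin n, 1 / (4 * t * δ ^ 2) :=
        sum_le_sum fun i _ => bernProb_abs_sub_ge_le (hp i).1 (hp i).2 hδ ht
    _ = n / (4 * t * δ ^ 2) := by simp [div_eq_mul_one_div (n : ℝ)]

def cell (θ δ : ℝ) (p : Fin n → ℝ) (A B : Finset (Fin n)) : Set (Fin t → Fin n → Bool) :=
  {x | A = ({i | p i ≤ θ ∧ empAvg t x i ≤ δ} : Finset (Fin n)) ∧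
    B = ({i | 1 - θ ≤ p i ∧ 1 - δ ≤ empAvg t x i} : Finset (Fin n))}

variable {θ δ : ℝ} {A B : Finset (Fin n)}

lemma mem_cell_iff {x : Fin t → Fin n → Bool} :
    x ∈ cell θ δ p A B ↔ (∀ i, i ∈ A ↔ p i ≤ θ ∧ empAvg t x i ≤ δ) ∧
      (∀ i, i ∈ B ↔ 1 - θ ≤ p i ∧ 1 - δ ≤ empAvg t x i) := by
  simp [cell, Finset.ext_iff]

/-- The event that the realizations in `cell θ δ p A B` force on the `i`-th column. -/
noncomputable def escapeEvent (θ δ : ℝ) (A B : Finset (Fin n)) (p : Fin n → ℝ) (i : Fin n) :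
    Set (Fin t → Bool) :=
  if p i ≤ θ ∧ i ∉ A then {y | δ * t < heads y}
  else if 1 - θ ≤ p i ∧ i ∉ B then {y | δ * t < tails y} else Set.univ

lemma cell_subset_escapeEvent (ht : 0 < t) :
    cell θ δ p A B ⊆ {x : Fin t → Fin n → Bool | ∀ i, column x i ∈ escapeEvent θ δ A B p i} := by
  have htR : (0 : ℝ) < t := by exact_mod_cast ht
  intro x hx i
  obtain ⟨hA, hB⟩ := mem_cell_iff.1 hx
  unfold escapeEvent
  split_ifs with hlo hhi
  · have : δ < empAvg t x i := not_le.1 fun h => hlo.2 ((hA i).2 ⟨hlo.1, h⟩)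
    rwa [empAvg_eq_heads, lt_div_iff₀ htR] at this
  · have : δ < 1 - empAvg t x i := by linarith [not_le.1 fun h => hhi.2 ((hB i).2 ⟨hhi.1, h⟩)]
    rwa [one_sub_empAvg ht, lt_div_iff₀ htR] at this
  · trivial

lemma bernProb_escapeEvent_le {m : ℕ} (hp : p ∈ cube n) (hδ : 0 ≤ δ) {ε : ℝ}
    (htail : ∀ a, 0 ≤ a → a ≤ θ → 2 ^ t * a ^ (⌊δ * t⌋₊ + 1) ≤ ε * a ^ m) (i : Fin n) :
    bernProb t (p i) (escapeEvent θ δ A B p i)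
      ≤ (if (p i ≤ θ ∧ i ∉ A) ∨ (1 - θ ≤ p i ∧ i ∉ B) then ε else 1) * gap θ A B p i ^ m := by
  obtain ⟨h0, h1⟩ := hp i
  by_cases hlo : p i ≤ θ ∧ i ∉ A
  · simp only [escapeEvent, gap, if_pos hlo, if_pos (Or.inl hlo)]
    exact (bernProb_heads_gt_le h0 h1 (by positivity)).trans (htail _ h0 hlo.1)
  by_cases hhi : 1 - θ ≤ p i ∧ i ∉ B
  · simp only [escapeEvent, gap, if_neg hlo, if_pos hhi, if_pos (Or.inr hhi)]
    exact (bernProb_tails_gt_le h0 h1 (by positivity)).trans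
      (htail _ (by linarith) (by linarith [hhi.1]))
  · simp only [escapeEvent, gap, if_neg hlo, if_neg hhi, if_neg (not_or.2 ⟨hlo, hhi⟩),
      bernProb_univ, one_pow, mul_one, le_refl]

lemma coinProb_cell_le {m : ℕ} (hp : p ∈ cube n) (hδ : 0 ≤ δ) (ht : 0 < t) {ε : ℝ} (hε0 : 0 ≤ ε)
    (hε1 : ε ≤ 1) (htail : ∀ a, 0 ≤ a → a ≤ θ → 2 ^ t * a ^ (⌊δ * t⌋₊ + 1) ≤ ε * a ^ m)
    (hU : ∃ i, (p i ≤ θ ∧ i ∉ A) ∨ (1 - θ ≤ p i ∧ i ∉ B)) :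
    coinProb t p (cell θ δ p A B) ≤ ε * (∏ i, gap θ A B p i) ^ m := by
  calc coinProb t p (cell θ δ p A B) ≤ ∏ i, bernProb t (p i) (escapeEvent θ δ A B p i) :=
        coinProb_pi p _ ▸ coinProb_mono hp (cell_subset_escapeEvent ht)
    _ ≤ ∏ i, (if (p i ≤ θ ∧ i ∉ A) ∨ (1 - θ ≤ p i ∧ i ∉ B) then ε else 1)
          * gap θ A B p i ^ m :=
        prod_le_prod (fun i _ => bernProb_nonneg (hp i).1 (hp i).2 _) fun i _ =>
          bernProb_escapeEvent_le hp hδ htail i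
    _ = ε ^ #{i | (p i ≤ θ ∧ i ∉ A) ∨ (1 - θ ≤ p i ∧ i ∉ B)} * (∏ i, gap θ A B p i) ^ m := by
        rw [prod_mul_distrib, prod_ite, prod_const, prod_const_one, mul_one, prod_pow]
    _ ≤ ε * (∏ i, gap θ A B p i) ^ m := by
        obtain ⟨i, hi⟩ := hU
        exact mul_le_mul_of_nonneg_right
          (pow_le_of_le_one hε0 hε1 (card_ne_zero.2 ⟨i, by simpa using hi⟩))
          (pow_nonneg (prod_nonneg fun i _ => gap_nonneg hp i) m)

lemma coinProb_le_of_forall_cell (hp : p ∈ cube n) {E : Set (Fin t → Fin n → Bool)} {b : ℝ}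
    (hb : ∀ A B, coinProb t p (E ∩ cell θ δ p A B) ≤ b) : coinProb t p E ≤ 4 ^ n * b := by
  calc coinProb t p E
      ≤ coinProb t p (⋃ AB ∈ (univ : Finset (Finset (Fin n) × Finset (Fin n))),
          E ∩ cell θ δ p AB.1 AB.2) :=
        coinProb_mono hp fun x hx => Set.mem_biUnion (mem_univ (_, _)) ⟨hx, rfl, rfl⟩
    _ ≤ ∑ _AB : Finset (Fin n) × Finset (Fin n), b :=
        (coinProb_biUnion_le hp _ _).trans (sum_le_sum fun AB _ => hb AB.1 AB.2)
    _ = 4 ^ n * b := by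
        rw [sum_const, card_univ, Fintype.card_prod, Fintype.card_finset, Fintype.card_fin,
          nsmul_eq_mul]
        push_cast
        rw [← mul_pow]
        norm_num

end Cells

section CellBounds

variable {n t m : ℕ} {h : (Fin n → ℝ) → ℝ} {c θ δ ε : ℝ} {p : Fin n → ℝ}

lemma not_forall_face_eq_zero_of_mem_cell
    (hmod : ∀ q ∈ cube n, ∀ q' ∈ cube n, dist q q' ≤ δ → |h q - h q'| < 1 / 6)
    (hδ0 : 0 < δ) (hδ : δ ≤ 1 / 2) {A B : Finset (Fin n)} (hAB : Disjoint A B)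
    {x : Fin t → Fin n → Bool} (hx : x ∈ cell θ δ p A B) (hxE : 1 / 2 ≤ h (empAvg t x)) :
    ¬ ∀ q ∈ face A B, h q = 0 := by
  intro hzero
  obtain ⟨hA, hB⟩ := mem_cell_iff.1 hx
  obtain ⟨q, hq, hdist⟩ := exists_mem_face_dist_le hAB hδ0 hδ (empAvg_mem_cube x)
    (fun i hi => ((hA i).1 hi).2) fun i hi => ((hB i).1 hi).2
  have := hmod _ (empAvg_mem_cube x) q (face_subset_cube A B hq) hdist
  rw [hzero q hq, sub_zero, abs_lt] at this
  linarith [this.2]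

lemma mul_pow_mul_prod_gap_pow_le_of_mem_cell
    (hpb : ∀ A B : Finset (Fin n), Disjoint A B → (¬ ∀ q ∈ face A B, h q = 0) →
      ∀ p ∈ cube n, c * facePoly A B p ^ m ≤ h p)
    (hmod : ∀ q ∈ cube n, ∀ q' ∈ cube n, dist q q' ≤ δ → |h q - h q'| < 1 / 6)
    (hc : 0 ≤ c) (hδ0 : 0 < δ) (hδ : δ ≤ 1 / 2) (hθ0 : 0 < θ) (hθ : θ < 1 / 2)
    (hp : p ∈ cube n) {A B : Finset (Fin n)} {x : Fin t → Fin n → Bool}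
    (hx : x ∈ cell θ δ p A B) (hxE : 1 / 2 ≤ h (empAvg t x)) :
    c * (θ * (1 - θ)) ^ (n * m) * (∏ i, gap θ A B p i) ^ m ≤ h p := by
  obtain ⟨hA, hB⟩ := mem_cell_iff.1 hx
  have hAB : Disjoint A B := disjoint_left.2 fun i hiA hiB => by
    linarith [((hA i).1 hiA).1, ((hB i).1 hiB).1]
  have hgap := pow_mul_prod_gap_le_facePoly hθ0.le hθ.le hp hAB (fun i hi => ((hA i).1 hi).1)
    fun i hi => ((hB i).1 hi).1
  have hlam : 0 ≤ θ * (1 - θ) := mul_nonneg hθ0.le (by linarith)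
  calc c * (θ * (1 - θ)) ^ (n * m) * (∏ i, gap θ A B p i) ^ m
      = c * ((θ * (1 - θ)) ^ n * ∏ i, gap θ A B p i) ^ m := by rw [mul_pow _ _ m, pow_mul]; ring
    _ ≤ c * facePoly A B p ^ m := by
        gcongr
        exact mul_nonneg (by positivity) (prod_nonneg fun i _ => gap_nonneg hp i)
    _ ≤ h p := hpb A B hAB (not_forall_face_eq_zero_of_mem_cell hmod hδ0 hδ hAB hx hxE) p hp

lemma setOf_half_le_subset_exists_abs_sub_ge
    (hmod : ∀ q ∈ cube n, ∀ q' ∈ cube n, dist q q' ≤ δ → |h q - h q'| < 1 / 6)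
    (hδ0 : 0 < δ) (hp : p ∈ cube n) (hhp : h p < 1 / 3) :
    {x : Fin t → Fin n → Bool | 1 / 2 ≤ h (empAvg t x)} ⊆ {x | ∃ i, δ ≤ |empAvg t x i - p i|} := by
  intro x hx
  by_contra hnear
  simp only [Set.mem_ofPred_eq, not_exists, not_le] at hx hnear
  have := hmod _ (empAvg_mem_cube x) p hp
    ((dist_pi_le_iff hδ0.le).2 fun i => (Real.dist_eq _ _ ▸ hnear i).le)
  linarith [(abs_lt.1 this).2]

lemma coinProb_inter_cell_le
    (hpb : ∀ A B : Finset (Fin n), Disjoint A B → (¬ ∀ q ∈ face A B, h q = 0) →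
      ∀ p ∈ cube n, c * facePoly A B p ^ m ≤ h p)
    (hmod : ∀ q ∈ cube n, ∀ q' ∈ cube n, dist q q' ≤ δ → |h q - h q'| < 1 / 6)
    (hc : 0 ≤ c) (hδ0 : 0 < δ) (hδ : δ ≤ 1 / 2) (hθ0 : 0 < θ) (hθ : θ < 1 / 2)
    (ht : 0 < t) (hε0 : 0 ≤ ε) (hε1 : ε ≤ 1)
    (htail : ∀ a, 0 ≤ a → a ≤ θ → 2 ^ t * a ^ (⌊δ * t⌋₊ + 1) ≤ ε * a ^ m)
    (hεD : ε ≤ 3 * c * (θ * (1 - θ)) ^ (n * m) / 4 ^ n)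
    (hcheb : n / (4 * t * δ ^ 2) ≤ 3 * c * (θ * (1 - θ)) ^ (n * m) / 4 ^ n)
    (hp : p ∈ cube n) (h0 : 0 ≤ h p) (hhp : h p < 1 / 3) (A B : Finset (Fin n)) :
    coinProb t p ({x | 1 / 2 ≤ h (empAvg t x)} ∩ cell θ δ p A B) ≤ 3 / 4 ^ n * h p := by
  set E : Set (Fin t → Fin n → Bool) := {x | 1 / 2 ≤ h (empAvg t x)}
  set P := (∏ i, gap θ A B p i) ^ m
  rcases (E ∩ cell θ δ p A B).eq_empty_or_nonempty with hempty | ⟨x, hxE, hx⟩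
  · simp only [hempty, coinProb, Set.indicator_empty, sum_const_zero]
    positivity
  have hlow := mul_pow_mul_prod_gap_pow_le_of_mem_cell hpb hmod hc hδ0 hδ hθ0 hθ hp hx hxE
  have hprob : coinProb t p (E ∩ cell θ δ p A B) ≤ 3 * c * (θ * (1 - θ)) ^ (n * m) / 4 ^ n * P := by
    by_cases hU : ∃ i, (p i ≤ θ ∧ i ∉ A) ∨ (1 - θ ≤ p i ∧ i ∉ B)
    · calc coinProb t p (E ∩ cell θ δ p A B) ≤ coinProb t p (cell θ δ p A B) :=
            coinProb_mono hp Set.inter_subset_right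
        _ ≤ ε * P := coinProb_cell_le hp hδ0.le ht hε0 hε1 htail hU
        _ ≤ _ := mul_le_mul_of_nonneg_right hεD (pow_nonneg (prod_nonneg fun i _ =>
            gap_nonneg hp i) m)
    · simp only [P, prod_gap_eq_one hU, one_pow, mul_one]
      exact (coinProb_mono hp (Set.inter_subset_left.trans
        (setOf_half_le_subset_exists_abs_sub_ge hmod hδ0 hp hhp))).trans
        ((coinProb_exists_abs_sub_ge_le hp hδ0 ht).trans hcheb)
  calc coinProb t p (E ∩ cell θ δ p A B) ≤ 3 * c * (θ * (1 - θ)) ^ (n * m) / 4 ^ n * P := hprob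
    _ = 3 / 4 ^ n * (c * (θ * (1 - θ)) ^ (n * m) * P) := by ring
    _ ≤ 3 / 4 ^ n * h p := by gcongr

end CellBounds

open Filter in
/-- `θ` is chosen so that `θ ^ k ≤ (1/8) ^ t` whenever `δ * t < k`. -/
lemma exists_tail_threshold {δ : ℝ} (hδ : 0 < δ) :
    ∃ θ : ℝ, 0 < θ ∧ θ < 1 / 2 ∧ ∀ m : ℕ, ∀ᶠ t : ℕ in atTop, ∀ a, 0 ≤ a → a ≤ θ →
      2 ^ t * a ^ (⌊δ * t⌋₊ + 1) ≤ (1 / 4) ^ t / θ ^ m * a ^ m := by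
  set N := ⌈1 / δ⌉₊
  have hN : 1 ≤ δ * N := by
    have := Nat.le_ceil (1 / δ)
    rwa [div_le_iff₀' hδ] at this
  have hN0 : N ≠ 0 := (Nat.ceil_pos.2 (by positivity)).ne'
  refine ⟨(1 / 8) ^ N, by positivity, ?_, fun m => ?_⟩
  · calc ((1 : ℝ) / 8) ^ N ≤ 1 / 8 := pow_le_of_le_one (by norm_num) (by norm_num) hN0
      _ < 1 / 2 := by norm_num
  filter_upwards [(tendsto_natCast_atTop_atTop.const_mul_atTop hδ).eventually_ge_atTop (m : ℝ)]
    with t hm a ha haθ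
  refine two_pow_mul_pow_le ha haθ (by positivity) (Nat.le_succ_of_le (Nat.le_floor hm)) ?_
  rw [← pow_mul]
  refine pow_le_pow_of_le_one (by norm_num) (by norm_num) ?_
  have : (t : ℝ) ≤ N * (⌊δ * t⌋₊ + 1) := by
    nlinarith [Nat.lt_floor_add_one (δ * t), (Nat.cast_nonneg t : (0 : ℝ) ≤ t),
      (Nat.cast_nonneg N : (0 : ℝ) ≤ N)]
  exact_mod_cast this

open Filter in
theorem eventually_coinProb_half_le {n : ℕ} {h : (Fin n → ℝ) → ℝ} (h0 : ∀ p ∈ cube n, 0 ≤ h p)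
    (hcont : ContinuousOn h (cube n)) (hpb : PolyBounded h) :
    ∀ᶠ t in atTop, ∀ p ∈ cube n, coinProb t p {x | 1 / 2 ≤ h (empAvg t x)} ≤ 3 * h p := by
  obtain ⟨m, c, hc, hpb⟩ := hpb
  obtain ⟨δ₀, hδ₀, hmod⟩ := Metric.uniformContinuousOn_iff.1
    ((isCompact_cube n).uniformContinuousOn_of_continuous hcont) (1 / 6) (by norm_num)
  set δ := min (δ₀ / 2) (1 / 2)
  have hδ0 : 0 < δ := lt_min (by linarith) (by norm_num)
  have hmod' : ∀ q ∈ cube n, ∀ q' ∈ cube n, dist q q' ≤ δ → |h q - h q'| < 1 / 6 :=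
    fun q hq q' hq' hd => Real.dist_eq (h q) (h q') ▸
      hmod q hq q' hq' (hd.trans_lt ((min_le_left _ _).trans_lt (by linarith)))
  obtain ⟨θ, hθ0, hθ, htail⟩ := exists_tail_threshold hδ0
  set D := 3 * c * (θ * (1 - θ)) ^ (n * m) / 4 ^ n
  have hD : 0 < D := by
    have : 0 < θ * (1 - θ) := mul_pos hθ0 (by linarith)
    positivity
  have hcheb : ∀ᶠ t : ℕ in atTop, n / (4 * t * δ ^ 2) ≤ D := by
    filter_upwards [(tendsto_const_div_atTop_nhds_zero_nat (n / (4 * δ ^ 2) : ℝ)).eventually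
      (ge_mem_nhds hD)] with t ht
    rwa [div_div, mul_right_comm] at ht
  have hε : ∀ᶠ t : ℕ in atTop, (1 / 4 : ℝ) ^ t / θ ^ m ≤ min 1 D := by
    have := (tendsto_pow_atTop_nhds_zero_of_lt_one (by norm_num : (0 : ℝ) ≤ 1 / 4)
      (by norm_num)).div_const (θ ^ m)
    rw [zero_div] at this
    exact this.eventually (ge_mem_nhds (lt_min one_pos hD))
  filter_upwards [htail m, hcheb, hε, eventually_gt_atTop 0] with t htail hcheb hε ht p hp
  by_cases hhp : 1 / 3 ≤ h p
  · linarith [coinProb_le_one hp {x | 1 / 2 ≤ h (empAvg t x)}]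
  calc coinProb t p {x | 1 / 2 ≤ h (empAvg t x)} ≤ 4 ^ n * (3 / 4 ^ n * h p) :=
        coinProb_le_of_forall_cell hp (coinProb_inter_cell_le hpb hmod' hc.le hδ0
          (min_le_right _ _) hθ0 hθ ht (by positivity) (hε.trans (min_le_left _ _)) htail
          (hε.trans (min_le_right _ _)) hcheb hp (h0 p hp) (not_le.1 hhp))
    _ = 3 * h p := by field_simp

theorem stmt1 {n : ℕ} (f : (Fin n → ℝ) → ℝ)
    (hrange : ∀ p ∈ cube n, f p ∈ Set.Icc (0 : ℝ) 1)
    (hcont : ContinuousOn f (cube n))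
    (hpb : PolyBounded f)
    (hpb' : PolyBounded (fun p => 1 - f p)) :
    ∃ t : ℕ, ∀ g ftilde : (Fin n → ℝ) → ℝ,
      (∀ p, g p = coinProb t p {x | 1 / 2 ≤ f (empAvg t x)}) →
      (∀ p, ftilde p = (4 / 3) * (f p - (1 / 4) * g p)) →
      (∀ p ∈ cube n, ftilde p ∈ Set.Icc (0 : ℝ) 1) ∧
      ContinuousOn ftilde (cube n) ∧
      PolyBounded ftilde ∧
      PolyBounded (fun p => 1 - ftilde p) := by
  obtain ⟨t, hlow, hhigh⟩ := ((eventually_coinProb_half_le (fun p hp => (hrange p hp).1) hcont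
    hpb).and (eventually_coinProb_half_le (fun p hp => sub_nonneg.2 (hrange p hp).2)
      (continuousOn_const.sub hcont) hpb')).exists
  refine ⟨t, fun g ftilde hg hftilde => ?_⟩
  have hcomp : ∀ p ∈ cube n, f p ≤ 3 * ftilde p ∧ ftilde p ≤ 3 * f p ∧
      1 - f p ≤ 3 * (1 - ftilde p) ∧ 1 - ftilde p ≤ 3 * (1 - f p) := by
    intro p hp
    have hg0 : 0 ≤ g p := hg p ▸ coinProb_nonneg hp _
    have hg1 : g p ≤ 1 := hg p ▸ coinProb_le_one hp _
    have hgf : g p ≤ 3 * f p := hg p ▸ hlow p hp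
    have hgf' : 1 - g p ≤ 3 * (1 - f p) := hg p ▸ (one_sub_coinProb_le hp f).trans (hhigh p hp)
    obtain ⟨hf0, hf1⟩ := hrange p hp
    rw [hftilde p]
    exact ⟨by linarith, by linarith, by linarith, by linarith⟩
  have hrange' : ∀ p ∈ cube n, ftilde p ∈ Set.Icc (0 : ℝ) 1 := fun p hp =>
    ⟨by linarith [(hcomp p hp).1, (hrange p hp).1],
      by linarith [(hcomp p hp).2.2.1, (hrange p hp).2]⟩
  refine ⟨hrange', ?_, hpb.of_le (C := 3) (by norm_num) (fun p hp => (hcomp p hp).1)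
    (fun p hp => (hrange' p hp).1) (fun p hp => (hcomp p hp).2.1),
    hpb'.of_le (C := 3) (by norm_num) (fun p hp => (hcomp p hp).2.2.1)
    (fun p hp => sub_nonneg.2 (hrange' p hp).2) (fun p hp => (hcomp p hp).2.2.2)⟩
  rw [funext hftilde, funext hg]
  exact continuousOn_const.mul
    (hcont.sub (continuousOn_const.mul (continuous_coinProb _).continuousOn))
end

section
/- Let n, k be integers with 1 ≤ k < n, K = {p ∈ [0,1]^n : Σ_i p_i = k}, and U ⊆ {1,…,n} with |U| = k. Then the function f̄_U : K → [0,1], defined by f̄_U(x) = f_U(x) for x ∈ K not equal to any e_V with |V| = k, f̄_U(e_U) = 1, and f̄_U(e_V) = 0 for V ≠ U with |V| = k, is well-defined (the denominator of f_U is positive at all such x) and continuous on K. -/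
open Finset

/-- The domain `K = {p ∈ [0,1]^n : ∑ i, p i = k}`. -/
def Ksimplex (n k : ℕ) : Set (Fin n → ℝ) :=
  {p | (∀ i, 0 ≤ p i ∧ p i ≤ 1) ∧ ∑ i, p i = (k : ℝ)}

/-- `g_U(x) = (1/(n-k)) · ∏_{i∈U} x_i · ∏_{i∉U} (1-x_i) · ∑_{i∉U} x_i`. -/
noncomputable def gSampford (n k : ℕ) (U : Finset (Fin n)) (x : Fin n → ℝ) : ℝ :=
  (1 / ((n : ℝ) - (k : ℝ))) * (∏ i ∈ U, x i) * (∏ i ∈ Uᶜ, (1 - x i)) * (∑ i ∈ Uᶜ, x i)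

/-- `∑_{V ⊆ [n], |V| = k} g_V(x)`. -/
noncomputable def sumg (n k : ℕ) (x : Fin n → ℝ) : ℝ :=
  ∑ V ∈ Finset.powersetCard k (Finset.univ : Finset (Fin n)), gSampford n k V x

/-- The indicator vector `e_U` of a subset `U`. -/
def eU {n : ℕ} (U : Finset (Fin n)) : Fin n → ℝ := fun i => if i ∈ U then 1 else 0
open Classical in
/-- The continuous completion `f̄_U` of `f_U = g_U / ∑_V g_V` on `K`. -/
noncomputable def fbar (n k : ℕ) (U : Finset (Fin n)) (x : Fin n → ℝ) : ℝ :=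
  if x = eU U then 1
  else if ∃ V : Finset (Fin n), V.card = k ∧ x = eU V then 0
  else gSampford n k U x / sumg n k x

/-! The denominator `∑_V g_V` is positive away from the vertices `e_V`: between the coordinates
equal to `1` and the positive ones there is a `k`-set `W`, and `g_W(x) > 0`. Off the vertices
`f̄_U` is therefore a quotient of polynomials with nonvanishing denominator. Near a vertex `e_V`,
put `s = ∑_{i ∉ V} x_i = ∑_{i ∈ V} (1 - x_i)`. Then `g_V = h_V · s`, where `h_V`
(`gSampfordCoeff`) is continuous with `h_V(e_V) = 1/(n-k) > 0`, while every other `g_W` is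
`O(s²)`: it contains a factor `x_m` with `m ∉ V` and a factor `1 - x_j` with `j ∈ V`.
Hence `|f̄_U - δ_{UV}| = O(s)`, which tends to `0` at `e_V`. -/

open Filter Topology

lemma Finset.prod_le_of_mem_of_le_one {ι R : Type*} [DecidableEq ι] [CommSemiring R]
    [PartialOrder R] [IsOrderedRing R] {s : Finset ι} {f : ι → R}
    (h0 : ∀ i ∈ s, 0 ≤ f i) (h1 : ∀ i ∈ s, f i ≤ 1) {j : ι} (hj : j ∈ s) :
    ∏ i ∈ s, f i ≤ f j := by
  rw [← mul_prod_erase s f hj]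
  exact mul_le_of_le_one_right (h0 j hj)
    (prod_le_one (fun i hi => h0 i (mem_of_mem_erase hi)) fun i hi => h1 i (mem_of_mem_erase hi))

section Sampford

variable {n k : ℕ}

lemma eU_injective : Function.Injective (eU (n := n)) := by
  intro A B h
  ext i
  have := congrFun h i
  by_cases hA : i ∈ A <;> by_cases hB : i ∈ B <;> simp_all [eU]

lemma sum_compl_eq_sum_one_sub {x : Fin n → ℝ} (hxs : ∑ i, x i = k) {V : Finset (Fin n)}
    (hV : V.card = k) : ∑ i ∈ Vᶜ, x i = ∑ i ∈ V, (1 - x i) := by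
  have := sum_add_sum_compl V x
  simp only [sum_sub_distrib, sum_const, hV, nsmul_eq_mul, mul_one]
  linarith

lemma eq_eU_of_sum_compl_eq_zero {x : Fin n → ℝ} (hx : x ∈ Ksimplex n k)
    {V : Finset (Fin n)} (hV : V.card = k) (hs : ∑ i ∈ Vᶜ, x i = 0) : x = eU V := by
  obtain ⟨hx01, hxs⟩ := hx
  have hout := (sum_eq_zero_iff_of_nonneg fun i _ => (hx01 i).1).1 hs
  rw [sum_compl_eq_sum_one_sub hxs hV] at hs
  have hin := (sum_eq_zero_iff_of_nonneg fun i _ => sub_nonneg.2 (hx01 i).2).1 hs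
  funext i
  by_cases hi : i ∈ V
  · simp [eU, hi, (sub_eq_zero.1 (hin i hi)).symm]
  · simp [eU, hi, hout i (mem_compl.2 hi)]

lemma gSampford_nonneg (hkn : k ≤ n) {x : Fin n → ℝ} (hx : ∀ i, 0 ≤ x i ∧ x i ≤ 1)
    (W : Finset (Fin n)) : 0 ≤ gSampford n k W x := by
  have : (0 : ℝ) ≤ n - k := sub_nonneg.2 (by exact_mod_cast hkn)
  unfold gSampford
  have := prod_nonneg fun i (_ : i ∈ W) => (hx i).1
  have := prod_nonneg fun i (_ : i ∈ Wᶜ) => sub_nonneg.2 (hx i).2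
  have := sum_nonneg fun i (_ : i ∈ Wᶜ) => (hx i).1
  positivity

lemma gSampford_le_sumg (hkn : k ≤ n) {x : Fin n → ℝ} (hx : ∀ i, 0 ≤ x i ∧ x i ≤ 1)
    {W : Finset (Fin n)} (hW : W.card = k) : gSampford n k W x ≤ sumg n k x :=
  single_le_sum (fun V _ => gSampford_nonneg hkn hx V) (mem_powersetCard_univ.2 hW)

lemma sumg_pos (hkn : k < n) {x : Fin n → ℝ} (hx : x ∈ Ksimplex n k)
    (hnv : ∀ V : Finset (Fin n), V.card = k → x ≠ eU V) : 0 < sumg n k x := by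
  obtain ⟨hx01, hxs⟩ := hx
  set A := univ.filter fun i => x i = 1
  set P := univ.filter fun i => 0 < x i
  have hAP : A ⊆ P := fun i hi => by simp_all [A, P]
  have hA : A.card ≤ k := by
    have : (A.card : ℝ) ≤ k := calc
      (A.card : ℝ) = ∑ _i ∈ A, (1 : ℝ) := by simp
      _ = ∑ i ∈ A, x i := sum_congr rfl fun i hi => (mem_filter.1 hi).2.symm
      _ ≤ ∑ i, x i := sum_le_sum_of_subset_of_nonneg (subset_univ A) fun i _ _ => (hx01 i).1
      _ = k := hxs
    exact_mod_cast this
  have hP : k ≤ P.card := by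
    have : (k : ℝ) ≤ P.card := calc
      (k : ℝ) = ∑ i ∈ P, x i := by
        rw [← hxs, sum_filter_of_ne fun i _ h => lt_of_le_of_ne (hx01 i).1 (Ne.symm h)]
      _ ≤ ∑ _i ∈ P, (1 : ℝ) := sum_le_sum fun i _ => (hx01 i).2
      _ = P.card := by simp
    exact_mod_cast this
  obtain ⟨W, hAW, hWP, hW⟩ := exists_subsuperset_card_eq hAP hA hP
  have hprod : 0 < ∏ i ∈ W, x i := prod_pos fun i hi => (mem_filter.1 (hWP hi)).2
  have hprod' : 0 < ∏ i ∈ Wᶜ, (1 - x i) := prod_pos fun i hi => sub_pos.2 <|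
    lt_of_le_of_ne (hx01 i).2 fun h => mem_compl.1 hi (hAW (mem_filter.2 ⟨mem_univ i, h⟩))
  have hsum : 0 < ∑ i ∈ Wᶜ, x i := (sum_nonneg fun i _ => (hx01 i).1).lt_of_ne fun h =>
    hnv W hW (eq_eU_of_sum_compl_eq_zero ⟨hx01, hxs⟩ hW h.symm)
  have hc : (0 : ℝ) < 1 / (n - k) := one_div_pos.2 (sub_pos.2 (by exact_mod_cast hkn))
  exact (mul_pos (mul_pos (mul_pos hc hprod) hprod') hsum).trans_le
    (gSampford_le_sumg hkn.le hx01 hW)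

noncomputable def gSampfordCoeff (n k : ℕ) (V : Finset (Fin n)) (x : Fin n → ℝ) : ℝ :=
  (1 / ((n : ℝ) - (k : ℝ))) * (∏ i ∈ V, x i) * (∏ i ∈ Vᶜ, (1 - x i))

lemma gSampford_eq_coeff_mul (V : Finset (Fin n)) (x : Fin n → ℝ) :
    gSampford n k V x = gSampfordCoeff n k V x * ∑ i ∈ Vᶜ, x i := rfl

lemma continuous_gSampfordCoeff (V : Finset (Fin n)) : Continuous (gSampfordCoeff n k V) := by
  unfold gSampfordCoeff
  fun_prop

lemma continuous_gSampford (W : Finset (Fin n)) : Continuous (gSampford n k W) := by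
  unfold gSampford
  fun_prop

lemma continuous_sumg : Continuous (sumg n k) :=
  continuous_finsetSum _ fun W _ => continuous_gSampford W

lemma gSampford_le_sq (hkn : k ≤ n) {x : Fin n → ℝ} (hx : x ∈ Ksimplex n k)
    {V W : Finset (Fin n)} (hV : V.card = k) (hW : W.card = k) (hne : W ≠ V) :
    gSampford n k W x ≤ (∑ i ∈ Vᶜ, x i) ^ 2 := by
  obtain ⟨hx01, hxs⟩ := hx
  have hnk : (0 : ℝ) ≤ n - k := sub_nonneg.2 (by exact_mod_cast hkn)
  obtain ⟨m, hmW, hmV⟩ : ∃ m ∈ W, m ∉ V := not_subset.1 fun h =>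
    hne (eq_of_subset_of_card_le h (by rw [hV, hW]))
  obtain ⟨j, hjV, hjW⟩ : ∃ j ∈ V, j ∉ W := not_subset.1 fun h =>
    hne (eq_of_subset_of_card_le h (by rw [hV, hW])).symm
  have hprod : ∏ i ∈ W, x i ≤ ∑ i ∈ Vᶜ, x i := calc
    _ ≤ x m := prod_le_of_mem_of_le_one (fun i _ => (hx01 i).1) (fun i _ => (hx01 i).2) hmW
    _ ≤ _ := single_le_sum (fun i _ => (hx01 i).1) (mem_compl.2 hmV)
  have hprod' : ∏ i ∈ Wᶜ, (1 - x i) ≤ ∑ i ∈ Vᶜ, x i := calc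
    _ ≤ 1 - x j := prod_le_of_mem_of_le_one (fun i _ => sub_nonneg.2 (hx01 i).2)
          (fun i _ => sub_le_self 1 (hx01 i).1) (mem_compl.2 hjW)
    _ ≤ ∑ i ∈ V, (1 - x i) := single_le_sum (f := fun i => 1 - x i)
          (fun i _ => sub_nonneg.2 (hx01 i).2) hjV
    _ = _ := (sum_compl_eq_sum_one_sub hxs hV).symm
  have hlast : (∑ i ∈ Wᶜ, x i) / (n - k) ≤ 1 := by
    refine div_le_one_of_le₀ ?_ hnk
    calc ∑ i ∈ Wᶜ, x i ≤ ∑ _i ∈ Wᶜ, (1 : ℝ) := sum_le_sum fun i _ => (hx01 i).2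
      _ = n - k := by simp [card_compl, hW, Nat.cast_sub hkn]
  have hs0 : 0 ≤ ∑ i ∈ Vᶜ, x i := sum_nonneg fun i _ => (hx01 i).1
  calc gSampford n k W x
      = (∏ i ∈ W, x i) * (∏ i ∈ Wᶜ, (1 - x i)) * ((∑ i ∈ Wᶜ, x i) / (n - k)) := by
        unfold gSampford; ring
    _ ≤ (∑ i ∈ Vᶜ, x i) * (∑ i ∈ Vᶜ, x i) * 1 :=
        mul_le_mul (mul_le_mul hprod hprod' (prod_nonneg fun i _ => sub_nonneg.2 (hx01 i).2)
          hs0) hlast (div_nonneg (sum_nonneg fun i _ => (hx01 i).1) hnk) (mul_nonneg hs0 hs0)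
    _ = _ := by ring

lemma fbar_eq_div {U : Finset (Fin n)} (hU : U.card = k) {x : Fin n → ℝ}
    (h : ¬∃ V : Finset (Fin n), V.card = k ∧ x = eU V) :
    fbar n k U x = gSampford n k U x / sumg n k x := by
  rw [fbar, if_neg fun hxU => h ⟨U, hU, hxU⟩, if_neg h]

lemma fbar_eU {U V : Finset (Fin n)} (hV : V.card = k) :
    fbar n k U (eU V) = if U = V then 1 else 0 := by
  by_cases h : U = V
  · subst h
    simp [fbar]
  · rw [fbar, if_neg fun he => h (eU_injective he).symm, if_pos ⟨V, hV, rfl⟩, if_neg h]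

lemma sum_erase_gSampford_le (hkn : k ≤ n) {x : Fin n → ℝ} (hx : x ∈ Ksimplex n k)
    {V : Finset (Fin n)} (hV : V.card = k) :
    ∑ W ∈ (powersetCard k univ).erase V, gSampford n k W x ≤
      n.choose k * (∑ i ∈ Vᶜ, x i) ^ 2 := calc
  _ ≤ ∑ _W ∈ (powersetCard k univ).erase V, (∑ i ∈ Vᶜ, x i) ^ 2 :=
    sum_le_sum fun W hW =>
      gSampford_le_sq hkn hx hV (mem_powersetCard_univ.1 (mem_of_mem_erase hW)) (ne_of_mem_erase hW)
  _ ≤ _ := by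
      rw [sum_const, nsmul_eq_mul]
      gcongr
      exact card_erase_le.trans (by simp)

/- With `R = ∑_{W ≠ V} g_W`, both `1 - f_V` and `f_U` (`U ≠ V`) are at most
`R / (g_V + R) ≤ R / g_V`. -/
lemma abs_fbar_sub_le (hkn : k < n) {U V : Finset (Fin n)} (hU : U.card = k)
    (hV : V.card = k) {x : Fin n → ℝ} (hx : x ∈ Ksimplex n k)
    (hh : 0 < gSampfordCoeff n k V x) :
    |fbar n k U x - if U = V then 1 else 0| ≤
      n.choose k * (∑ i ∈ Vᶜ, x i) / gSampfordCoeff n k V x := by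
  set s := ∑ i ∈ Vᶜ, x i
  have hs0 : 0 ≤ s := sum_nonneg fun i _ => (hx.1 i).1
  by_cases hvert : ∃ W : Finset (Fin n), W.card = k ∧ x = eU W
  · obtain ⟨W, hW, rfl⟩ := hvert
    have hVW : V ⊆ W := fun i hiV => by
      by_contra hiW
      refine hh.ne' (mul_eq_zero_of_left (mul_eq_zero_of_right _ (prod_eq_zero hiV ?_)) _)
      simp [eU, hiW]
    obtain rfl := eq_of_subset_of_card_le hVW (by rw [hV, hW])
    rw [fbar_eU hW, sub_self, abs_zero]
    positivity
  have hs : 0 < s := hs0.lt_of_ne fun h =>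
    hvert ⟨V, hV, eq_eU_of_sum_compl_eq_zero hx hV h.symm⟩
  set R := ∑ W ∈ (powersetCard k univ).erase V, gSampford n k W x
  have hsplit : sumg n k x = gSampford n k V x + R :=
    (add_sum_erase _ _ (mem_powersetCard_univ.2 hV)).symm
  have hR0 : 0 ≤ R := sum_nonneg fun W _ => gSampford_nonneg hkn.le hx.1 W
  have hgV : 0 < gSampford n k V x := mul_pos hh hs
  have hdiff : |fbar n k U x - if U = V then 1 else 0| ≤ R / sumg n k x := by
    rw [fbar_eq_div hU hvert, hsplit]
    split_ifs with hUV
    · subst hUV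
      have : gSampford n k U x / (gSampford n k U x + R) - 1 =
          -(R / (gSampford n k U x + R)) := by
        field_simp
        ring
      rw [this, abs_neg, abs_of_nonneg (div_nonneg hR0 (by linarith))]
    · have hUR : gSampford n k U x ≤ R :=
        single_le_sum (fun W _ => gSampford_nonneg hkn.le hx.1 W)
          (mem_erase.2 ⟨hUV, mem_powersetCard_univ.2 hU⟩)
      rw [sub_zero, abs_of_nonneg (div_nonneg (gSampford_nonneg hkn.le hx.1 U) (by linarith))]
      gcongr
  calc _ ≤ R / sumg n k x := hdiff
    _ ≤ R / gSampford n k V x := by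
        gcongr
        linarith
    _ ≤ n.choose k * s ^ 2 / (gSampfordCoeff n k V x * s) := by
        rw [gSampford_eq_coeff_mul]
        gcongr
        exact sum_erase_gSampford_le hkn.le hx hV
    _ = _ := by field_simp

lemma continuousWithinAt_fbar_eU (hkn : k < n) {U V : Finset (Fin n)} (hU : U.card = k)
    (hV : V.card = k) : ContinuousWithinAt (fbar n k U) (Ksimplex n k) (eU V) := by
  have hh := continuous_gSampfordCoeff (k := k) V
  have hpos : 0 < gSampfordCoeff n k V (eU V) := by
    have h1 : ∏ i ∈ V, eU V i = 1 := prod_eq_one fun i hi => if_pos hi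
    have h2 : ∏ i ∈ Vᶜ, (1 - eU V i) = 1 :=
      prod_eq_one fun i hi => by simp [eU, mem_compl.1 hi]
    have : (0 : ℝ) < n - k := sub_pos.2 (by exact_mod_cast hkn)
    rw [gSampfordCoeff, h1, h2]
    positivity
  have hbound : Tendsto (fun x => n.choose k * (∑ i ∈ Vᶜ, x i) / gSampfordCoeff n k V x)
      (𝓝 (eU V)) (𝓝 0) := by
    have hs0 : ∑ i ∈ Vᶜ, eU V i = 0 := sum_eq_zero fun i hi => by simp [eU, mem_compl.1 hi]
    have hs : Tendsto (fun x : Fin n → ℝ => ∑ i ∈ Vᶜ, x i) (𝓝 (eU V)) (𝓝 0) :=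
      hs0 ▸ (continuous_finsetSum Vᶜ fun i _ => continuous_apply i).tendsto (eU V)
    have := (hs.const_mul (n.choose k : ℝ)).div (hh.tendsto (eU V)) hpos.ne'
    rwa [mul_zero, zero_div] at this
  rw [ContinuousWithinAt, fbar_eU hV, tendsto_iff_norm_sub_tendsto_zero]
  refine squeeze_zero' (Eventually.of_forall fun x => norm_nonneg _) ?_
    (hbound.mono_left nhdsWithin_le_nhds)
  filter_upwards [self_mem_nhdsWithin,
    mem_nhdsWithin_of_mem_nhds (hh.continuousAt.eventually (lt_mem_nhds hpos))] with x hx hxh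
  exact abs_fbar_sub_le hkn hU hV hx hxh

lemma isClosed_setOf_eq_eU :
    IsClosed {x : Fin n → ℝ | ∃ V : Finset (Fin n), V.card = k ∧ x = eU V} :=
  ((Set.finite_range eU).subset <| by rintro _ ⟨V, -, rfl⟩; exact ⟨V, rfl⟩).isClosed

lemma continuousWithinAt_fbar_of_ne_eU (hkn : k < n) {U : Finset (Fin n)} (hU : U.card = k)
    {x : Fin n → ℝ} (hx : x ∈ Ksimplex n k)
    (hnv : ¬∃ V : Finset (Fin n), V.card = k ∧ x = eU V) :
    ContinuousWithinAt (fbar n k U) (Ksimplex n k) x := by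
  have hpos := sumg_pos hkn hx fun V hV h => hnv ⟨V, hV, h⟩
  have heq : (fun y => gSampford n k U y / sumg n k y) =ᶠ[𝓝 x] fbar n k U := by
    filter_upwards [isClosed_setOf_eq_eU.isOpen_compl.mem_nhds hnv] with y hy
    exact (fbar_eq_div hU hy).symm
  exact ((continuous_gSampford U).continuousAt.div continuous_sumg.continuousAt
    hpos.ne').congr heq |>.continuousWithinAt

lemma fbar_mem_Icc (hkn : k < n) {U : Finset (Fin n)} (hU : U.card = k)
    {x : Fin n → ℝ} (hx : x ∈ Ksimplex n k) : fbar n k U x ∈ Set.Icc (0 : ℝ) 1 := by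
  by_cases hvert : ∃ V : Finset (Fin n), V.card = k ∧ x = eU V
  · obtain ⟨V, hV, rfl⟩ := hvert
    rw [fbar_eU hV]
    split_ifs <;> norm_num
  · have hpos := sumg_pos hkn hx fun V hV h => hvert ⟨V, hV, h⟩
    rw [fbar_eq_div hU hvert]
    exact ⟨div_nonneg (gSampford_nonneg hkn.le hx.1 U) hpos.le,
      div_le_one_of_le₀ (gSampford_le_sumg hkn.le hx.1 hU) hpos.le⟩

end Sampford

theorem stmt12_general (n k : ℕ) (hkn : k < n)
    (U : Finset (Fin n)) (hU : U.card = k) :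
    (∀ x ∈ Ksimplex n k, (∀ V : Finset (Fin n), V.card = k → x ≠ eU V) →
      0 < sumg n k x) ∧
    (∀ x ∈ Ksimplex n k, fbar n k U x ∈ Set.Icc (0 : ℝ) 1) ∧
    ContinuousOn (fbar n k U) (Ksimplex n k) := by
  refine ⟨fun x hx hnv => sumg_pos hkn hx hnv, fun x hx => fbar_mem_Icc hkn hU hx,
    fun x hx => ?_⟩
  by_cases hvert : ∃ V : Finset (Fin n), V.card = k ∧ x = eU V
  · obtain ⟨V, hV, rfl⟩ := hvert
    exact continuousWithinAt_fbar_eU hkn hU hV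
  · exact continuousWithinAt_fbar_of_ne_eU hkn hU hx hvert

theorem stmt12 (n k : ℕ) (hk : 1 ≤ k) (hkn : k < n)
    (U : Finset (Fin n)) (hU : U.card = k) :
    (∀ x ∈ Ksimplex n k, (∀ V : Finset (Fin n), V.card = k → x ≠ eU V) →
      0 < sumg n k x) ∧
    (∀ x ∈ Ksimplex n k, fbar n k U x ∈ Set.Icc (0 : ℝ) 1) ∧
    ContinuousOn (fbar n k U) (Ksimplex n k) :=
  stmt12_general n k hkn U hU
end
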